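/- arXiv:2006.14915 — 6 statements merged into one kernel-verified Lean document; each statement's English description precedes it below -/
import Mathlib

section
/- Suppose ζ satisfies Properties P1–P4, and let ρ : (0,∞) → [0,∞) be the function such that ρ(λ) = lim_{s→∞} E[ζ(H_{λ,s})]/(λ s^d) for each λ > 0 (this limit exists). Let K := max(c₁ + ζ({o}), c₂ − ζ({o})), where c₁, c₂ are the constants in P3 and P4. Then for all 0 < λ ≤ λ′, |λ′·ρ(λ′) − λ·ρ(λ)| ≤ K·(λ′ − λ); that is, λ ↦ λ·ρ(λ) is Lipschitz continuous on (0,∞) with Lipschitz constant at most K, and hence λ ↦ ρ(λ) is continuous on (0,∞). -/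
open MeasureTheory ProbabilityTheory Filter Set Metric Bornology
open scoped Classical ENNReal NNReal symmDiff

noncomputable section

/-- Points of `ℝ^d`. -/
abbrev Pt (d : ℕ) := EuclideanSpace ℝ (Fin d)

/-- The half-open cube `Q_s = [-s/2, s/2)^d`. -/
def cube (d : ℕ) (s : ℝ) : Set (Pt d) := {x | ∀ i, x i ∈ Set.Ico (-(s / 2)) (s / 2)}

/-- The uniform distribution on `Q_s`. -/
def unifCube (d : ℕ) (s : ℝ) : Measure (Pt d) :=
  (volume (cube d s))⁻¹ • volume.restrict (cube d s)

/-- `E[ζ(H_{λ,s})]`, where `H_{λ,s} = {Y_1, …, Y_N}` with `N` a Poisson random variable of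
mean `λ s^d` independent of an i.i.d. sequence `Y_1, Y_2, …` of uniform points of `Q_s`. -/
def poissonExp (d : ℕ) (zeta : Finset (Pt d) → ℝ) (lam s : ℝ) : ℝ :=
  ∑' k : ℕ, (Real.exp (-(lam * s ^ d)) * (lam * s ^ d) ^ k / (Nat.factorial k : ℝ)) *
    ∫ y : Fin k → Pt d, zeta (Finset.image y Finset.univ) ∂(Measure.pi fun _ => unifCube d s)

/-- `|∂_Z(Y)|`: the number of points of `Y` lying within Euclidean distance 1 of `Z`. -/
def bdry (d : ℕ) (Y Z : Finset (Pt d)) : ℕ :=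
  {y ∈ (Y : Set (Pt d)) | ∃ z ∈ Z, dist y z ≤ 1}.ncard

/-- The rescaled set `r⁻¹ 𝒳`. -/
def scaleSet (d : ℕ) (r : ℝ) (X : Finset (Pt d)) : Finset (Pt d) :=
  X.image fun x => r⁻¹ • x

/-- `ζ*(A) = sup {ζ(X) : X ⊆ A finite}`. -/
def zetaStar (d : ℕ) (zeta : Finset (Pt d) → ℝ) (A : Set (Pt d)) : ℝ :=
  sSup {t | ∃ X : Finset (Pt d), (X : Set (Pt d)) ⊆ A ∧ t = zeta X}

/-- Domination number of the geometric graph `G(X, r)`. -/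
def domNum (d : ℕ) (r : ℝ) (X : Finset (Pt d)) : ℕ :=
  sInf {n | ∃ A ⊆ X, A.card = n ∧ ∀ x ∈ X, ∃ a ∈ A, dist x a ≤ r}

/-- Independence number of the geometric graph `G(X, r)`. -/
def indepNum (d : ℕ) (r : ℝ) (X : Finset (Pt d)) : ℕ :=
  sSup {n | ∃ A ⊆ X, A.card = n ∧ ∀ x ∈ A, ∀ y ∈ A, x ≠ y → r < dist x y}

/-- Clique-covering number of the geometric graph `G(X, r)`. -/
def cliqueCoverNum (d : ℕ) (r : ℝ) (X : Finset (Pt d)) : ℕ :=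
  sInf {n | ∃ P : Finset (Finset (Pt d)), P.card = n ∧
    (∀ C ∈ P, C ⊆ X ∧ C.Nonempty ∧ ∀ x ∈ C, ∀ y ∈ C, x ≠ y → dist x y ≤ r) ∧
    ∀ x ∈ X, ∃! C, C ∈ P ∧ x ∈ C}

/-- Vertex cover number of the geometric graph `G(X, r)`. -/
def vcNum (d : ℕ) (r : ℝ) (X : Finset (Pt d)) : ℕ :=
  sInf {n | ∃ A ⊆ X, A.card = n ∧
    ∀ x ∈ X, ∀ y ∈ X, x ≠ y → dist x y ≤ r → x ∈ A ∨ y ∈ A}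

/-- Number of isolated vertices of the geometric graph `G(X, r)`. -/
def isolCount (d : ℕ) (r : ℝ) (X : Finset (Pt d)) : ℕ :=
  {x ∈ (X : Set (Pt d)) | ∀ y ∈ X, y ≠ x → r < dist x y}.ncard

/-- `κ(A)`: the minimal number of closed unit balls whose union contains `A`. -/
def covNum (d : ℕ) (A : Set (Pt d)) : ℕ :=
  sInf {n | ∃ C : Finset (Pt d), C.card = n ∧ A ⊆ ⋃ x ∈ C, Metric.closedBall x 1}

/-- `α*(A)`: the maximum cardinality of a finite subset of `A` with pairwise distances `> 1`. -/
def packNum (d : ℕ) (A : Set (Pt d)) : ℕ :=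
  sSup {n | ∃ X : Finset (Pt d), (X : Set (Pt d)) ⊆ A ∧ X.card = n ∧
    ∀ x ∈ X, ∀ y ∈ X, x ≠ y → 1 < dist x y}

/-- `γ*(A) = sup {γ(G(X,1)) : X ⊆ A finite}`. -/
def domStar (d : ℕ) (A : Set (Pt d)) : ℕ :=
  sSup {n | ∃ X : Finset (Pt d), (X : Set (Pt d)) ⊆ A ∧ domNum d 1 X = n}

/-- Minimum weight of a travelling salesman tour through `X`, for the weight function `w`
(a tour is a Hamiltonian cycle of the complete graph on `X`, and an edge `{x,y}` has
weight `w (x - y)`), with the convention that the value is `0` when `|X| ≤ 2`. -/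
def TSPw (d : ℕ) (w : Pt d → ℝ) (X : Finset (Pt d)) : ℝ :=
  if h : 3 ≤ X.card then
    haveI : NeZero X.card := ⟨by omega⟩
    sInf {t | ∃ g : Fin X.card → Pt d, Function.Injective g ∧ (∀ i, g i ∈ X) ∧
      t = ∑ i, w (g (i + 1) - g i)}
  else 0

/-- Maximum `H`-packing number of the geometric graph `G(X, r)`. -/
def hPackNum {V : Type} [Fintype V] (H : SimpleGraph V) (d : ℕ) (r : ℝ)
    (X : Finset (Pt d)) : ℕ :=
  sSup {m | ∃ φ : Fin m → V → Pt d,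
    (∀ i, Function.Injective (φ i)) ∧ (∀ i v, φ i v ∈ X) ∧
    (∀ i u v, H.Adj u v → dist (φ i u) (φ i v) ≤ r) ∧
    (∀ i j, i ≠ j → ∀ u v, φ i u ≠ φ j v)}


/-!
Write `F(k)` for the mean of `ζ` over `k` i.i.d. uniform points of `Q_s`, so that `E ζ(H_{λ,s})`
is the Poisson(`λ s^d`) average of `F`. By P2–P4, adding one point changes `ζ` by at most `K`
(the boundary term of a single point is at most one), hence `|F(k+1) − F(k)| ≤ K`. Splitting a
Poisson(`t + δ`) variable as the sum `M + J` of independent Poisson(`t`) and Poisson(`δ`) ones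
gives `|E F(M + J) − E F(M)| ≤ K · E J = K δ`, so `t ↦ E F(Poisson(t))` is `K`-Lipschitz. Dividing
by `s^d` and letting `s → ∞` yields the bound for `λ ρ(λ)`, and `ρ(λ) = λ ρ(λ) / λ` is then continuous.
-/

lemma Finset.image_univ_cons {α : Type*} [DecidableEq α] {k : ℕ} (a : α) (y : Fin k → α) :
    Finset.univ.image (Fin.cons a y : Fin (k + 1) → α) = insert a (Finset.univ.image y) := by
  apply Finset.coe_injective
  simp only [Finset.coe_image, Finset.coe_univ, Set.image_univ, Finset.coe_insert, Fin.range_cons]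

lemma abs_le_of_dist_insert_le {α : Type*} [DecidableEq α] {φ : Finset α → ℝ} {K : ℝ}
    (hφ : ∀ a X, dist (φ X) (φ (insert a X)) ≤ K) (X : Finset α) :
    |φ X| ≤ |φ ∅| + X.card * K := by
  induction X using Finset.induction with
  | empty => simp
  | insert a X ha ih =>
    rw [Finset.card_insert_of_notMem ha, Nat.cast_succ]
    have := hφ a X
    rw [Real.dist_eq] at this
    linarith [abs_sub_abs_le_abs_sub (φ (insert a X)) (φ X), abs_sub_comm (φ X) (φ (insert a X))]

section IIDMean

variable {α : Type*} [MeasurableSpace α] [DecidableEq α]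

def iidMean (μ : Measure α) (φ : Finset α → ℝ) (k : ℕ) : ℝ :=
  ∫ y : Fin k → α, φ (Finset.univ.image y) ∂Measure.pi fun _ => μ

lemma dist_iidMean_succ_le {μ : Measure α} [IsProbabilityMeasure μ] {φ : Finset α → ℝ} {K : ℝ}
    (hφ : ∀ k : ℕ, Measurable fun y : Fin k → α => φ (Finset.univ.image y))
    (hstep : ∀ a X, dist (φ X) (φ (insert a X)) ≤ K) (k : ℕ) :
    dist (iidMean μ φ k) (iidMean μ φ (k + 1)) ≤ K := by
  have := nonempty_of_isProbabilityMeasure μ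
  have hK : 0 ≤ K := dist_nonneg.trans (hstep (Classical.arbitrary α) ∅)
  set P := μ.prod (Measure.pi fun _ : Fin k => μ)
  set e := MeasurableEquiv.piFinSuccAbove (fun _ : Fin (k + 1) => α) 0
  have he (p : α × (Fin k → α)) :
      Finset.univ.image (e.symm p) = insert p.1 (Finset.univ.image p.2) := by
    simp only [e, MeasurableEquiv.piFinSuccAbove_symm_apply, Fin.insertNthEquiv, Equiv.coe_fn_mk,
      Fin.insertNth_zero', Finset.image_univ_cons]
  have hk : iidMean μ φ k = ∫ p, φ (Finset.univ.image p.2) ∂P := by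
    simp [P, iidMean, integral_fun_snd (fun y : Fin k → α => φ (Finset.univ.image y))]
  have hsucc : iidMean μ φ (k + 1) = ∫ p, φ (insert p.1 (Finset.univ.image p.2)) ∂P := by
    rw [iidMean, ← (measurePreserving_piFinSuccAbove (fun _ => μ) 0).symm.integral_comp']
    exact integral_congr_ae (ae_of_all _ fun p => congrArg φ (he p))
  have hbound (n : ℕ) (X : Finset α) (hX : X.card ≤ n) : ‖φ X‖ ≤ |φ ∅| + n * K :=
    (abs_le_of_dist_insert_le hstep X).trans (by gcongr)
  have hcard (p : α × (Fin k → α)) : (Finset.univ.image p.2).card ≤ k :=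
    Finset.card_image_le.trans (by simp)
  have hint_k : Integrable (fun p : α × (Fin k → α) => φ (Finset.univ.image p.2)) P :=
    .of_bound ((hφ k).comp measurable_snd).aestronglyMeasurable _
      (ae_of_all _ fun p => hbound k _ (hcard p))
  have hint_succ :
      Integrable (fun p : α × (Fin k → α) => φ (insert p.1 (Finset.univ.image p.2))) P :=
    .of_bound (by simpa only [Function.comp_def, he] using
        ((hφ (k + 1)).comp e.symm.measurable).aestronglyMeasurable) _
      (ae_of_all _ fun p =>
        hbound (k + 1) _ ((Finset.card_insert_le _ _).trans (by simpa using hcard p)))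
  rw [hk, hsucc, dist_eq_norm, ← integral_sub hint_k hint_succ]
  have := norm_integral_le_of_norm_le_const (μ := P)
    (ae_of_all _ fun p => (dist_eq_norm _ _).symm.trans_le (hstep p.1 (Finset.univ.image p.2)))
  rwa [probReal_univ, mul_one] at this

end IIDMean

lemma hasSum_mul_natCast_poissonMeasure (r : ℝ≥0) :
    HasSum (fun n : ℕ => Real.exp (-r) * r ^ n / n.factorial * n) r := by
  have shift (n : ℕ) : Real.exp (-r) * r ^ (n + 1) / (n + 1).factorial * ((n + 1 : ℕ) : ℝ) =
      r * (Real.exp (-r) * r ^ n / n.factorial) := by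
    rw [Nat.factorial_succ]
    push_cast
    field_simp
    ring
  refine (hasSum_nat_add_iff' 1).mp ?_
  simpa only [shift, Finset.sum_range_one, Nat.cast_zero, mul_zero, sub_zero, mul_one] using
    (hasSum_one_poissonMeasure r).mul_left (r : ℝ)

lemma integrable_natCast_poissonMeasure (r : ℝ≥0) : Integrable (fun n : ℕ => (n : ℝ)) Po(r) := by
  rw [integrable_poissonMeasure_iff]
  simpa using (hasSum_mul_natCast_poissonMeasure r).summable

lemma integral_natCast_poissonMeasure (r : ℝ≥0) : ∫ n, (n : ℝ) ∂Po(r) = r := by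
  simpa only [integral_poissonMeasure, smul_eq_mul] using
    (hasSum_mul_natCast_poissonMeasure r).tsum_eq

lemma dist_le_mul_of_dist_succ_le {F : ℕ → ℝ} {K : ℝ} (hF : ∀ n, dist (F n) (F (n + 1)) ≤ K)
    (m j : ℕ) : dist (F m) (F (m + j)) ≤ j * K := by
  simpa [mul_comm] using dist_le_Ico_sum_of_dist_le (Nat.le_add_right m j) (d := fun _ => K)
    fun {k} _ _ => hF k

lemma integrable_poissonMeasure_of_dist_succ_le {F : ℕ → ℝ} {K : ℝ}
    (hF : ∀ n, dist (F n) (F (n + 1)) ≤ K) (r : ℝ≥0) : Integrable F Po(r) := by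
  refine ((integrable_const |F 0|).add ((integrable_natCast_poissonMeasure r).mul_const K)).mono'
    Measurable.of_discrete.aestronglyMeasurable (ae_of_all _ fun n => ?_)
  have := dist_le_mul_of_dist_succ_le hF 0 n
  rw [zero_add, Real.dist_eq] at this
  show |F n| ≤ |F 0| + n * K
  linarith [abs_sub_abs_le_abs_sub (F n) (F 0), abs_sub_comm (F 0) (F n)]

lemma dist_integral_poissonMeasure_add_le {F : ℕ → ℝ} {K : ℝ}
    (hF : ∀ n, dist (F n) (F (n + 1)) ≤ K) (r δ : ℝ≥0) :
    dist (∫ n, F n ∂Po(r)) (∫ n, F n ∂Po(r + δ)) ≤ K * δ := by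
  set P := Po(r).prod Po(δ)
  have hadd : Measurable fun p : ℕ × ℕ => p.1 + p.2 := measurable_add
  have hshift : ∫ n, F n ∂Po(r + δ) = ∫ p, F (p.1 + p.2) ∂P := by
    rw [← poissonMeasure_conv_poissonMeasure, Measure.conv,
      integral_map hadd.aemeasurable Measurable.of_discrete.aestronglyMeasurable]
  have hfst : ∫ n, F n ∂Po(r) = ∫ p, F p.1 ∂P := by simp [P, integral_fun_fst]
  have hmean : ∫ p, K * (p.2 : ℝ) ∂P = K * δ := by
    rw [integral_const_mul, integral_fun_snd, integral_natCast_poissonMeasure]; simp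
  have hint_fst : Integrable (fun p : ℕ × ℕ => F p.1) P :=
    (integrable_poissonMeasure_of_dist_succ_le hF r).comp_fst _
  have hint_add : Integrable (fun p : ℕ × ℕ => F (p.1 + p.2)) P := by
    have := integrable_poissonMeasure_of_dist_succ_le hF (r + δ)
    rw [← poissonMeasure_conv_poissonMeasure, Measure.conv] at this
    exact this.comp_measurable hadd
  rw [hshift, hfst, dist_eq_norm, ← integral_sub hint_fst hint_add, ← hmean]
  refine norm_integral_le_of_norm_le
    (((integrable_natCast_poissonMeasure δ).comp_snd _).const_mul K) (ae_of_all _ fun p => ?_)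
  rw [← dist_eq_norm, mul_comm]
  exact dist_le_mul_of_dist_succ_le hF p.1 p.2

lemma lipschitzWith_integral_poissonMeasure {F : ℕ → ℝ} {K : ℝ≥0}
    (hF : ∀ n, dist (F n) (F (n + 1)) ≤ K) :
    LipschitzWith K fun r : ℝ≥0 => ∫ n, F n ∂Po(r) := by
  refine LipschitzWith.of_dist_le_mul fun r r' => ?_
  wlog h : r ≤ r' generalizing r r'
  · rw [dist_comm, dist_comm r]; exact this r' r (le_of_not_ge h)
  obtain ⟨δ, rfl⟩ := exists_add_of_le h
  simpa [NNReal.dist_eq] using dist_integral_poissonMeasure_add_le hF r δ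

lemma volume_cube (d : ℕ) (s : ℝ) : volume (cube d s) = ENNReal.ofReal s ^ d := by
  have hcube : cube d s = (MeasurableEquiv.toLp 2 (Fin d → ℝ)).symm ⁻¹'
      Set.univ.pi fun _ => Set.Ico (-(s / 2)) (s / 2) := by
    ext x; simp [cube, Set.mem_pi]
  rw [hcube, (EuclideanSpace.volume_preserving_symm_measurableEquiv_toLp (Fin d)).measure_preimage
    (MeasurableSet.univ_pi fun _ => measurableSet_Ico).nullMeasurableSet, volume_pi_pi]
  simp only [Real.volume_Ico, Finset.prod_const, Finset.card_univ, Fintype.card_fin]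
  ring_nf

lemma isProbabilityMeasure_unifCube (d : ℕ) {s : ℝ} (hs : 0 < s) :
    IsProbabilityMeasure (unifCube d s) := by
  have := volume_cube d s
  exact ProbabilityTheory.cond_isProbabilityMeasure_of_finite (by simp [this, hs]) (by simp [this])

lemma zeta_singleton {d : ℕ} {zeta : Finset (Pt d) → ℝ}
    (hP2 : ∀ (X : Finset (Pt d)) (x : Pt d), zeta (X.image fun y => x + y) = zeta X) (a : Pt d) :
    zeta {a} = zeta {0} := by
  simpa using hP2 {0} a

lemma bdry_singleton_le (d : ℕ) (a : Pt d) (X : Finset (Pt d)) : bdry d {a} X ≤ 1 := by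
  simpa [bdry] using Set.ncard_le_ncard (Set.sep_subset (({a} : Finset (Pt d)) : Set (Pt d)) _)
    (Set.toFinite _)

section Zeta

variable {d : ℕ} {zeta : Finset (Pt d) → ℝ} {c1 c2 : ℝ}

lemma dist_zeta_insert_le
    (hP2 : ∀ (X : Finset (Pt d)) (x : Pt d), zeta (X.image fun y => x + y) = zeta X)
    (hc1 : 0 ≤ c1) (hc2 : 0 ≤ c2)
    (hP3 : ∀ Y Z : Finset (Pt d), Disjoint Y Z → zeta (Y ∪ Z) ≤ zeta Y + zeta Z + c1)
    (hP4 : ∀ Y Z : Finset (Pt d), Disjoint Y Z →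
      zeta Y + zeta Z - c2 * (bdry d Y Z : ℝ) ≤ zeta (Y ∪ Z))
    (a : Pt d) (X : Finset (Pt d)) :
    dist (zeta X) (zeta (insert a X)) ≤ max (c1 + zeta {0}) (c2 - zeta {0}) := by
  by_cases ha : a ∈ X
  · rw [Finset.insert_eq_of_mem ha, dist_self, le_max_iff]
    by_contra! h
    linarith [h.1, h.2]
  have hdisj : Disjoint {a} X := Finset.disjoint_singleton_left.mpr ha
  have hupper := hP3 {a} X hdisj
  have hlower := hP4 {a} X hdisj
  have hbdry : c2 * (bdry d {a} X : ℝ) ≤ c2 :=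
    mul_le_of_le_one_right hc2 (by exact_mod_cast bdry_singleton_le d a X)
  rw [← Finset.insert_eq, zeta_singleton hP2] at hupper hlower
  rw [dist_comm, Real.dist_eq, abs_le]
  constructor <;> linarith [le_max_left (c1 + zeta {0}) (c2 - zeta {0}),
    le_max_right (c1 + zeta {0}) (c2 - zeta {0})]

lemma poissonExp_eq_integral_poissonMeasure {lam s : ℝ} (h : 0 ≤ lam * s ^ d) :
    poissonExp d zeta lam s = ∫ k, iidMean (unifCube d s) zeta k ∂Po((lam * s ^ d).toNNReal) := by
  simp only [integral_poissonMeasure, Real.coe_toNNReal _ h, smul_eq_mul, poissonExp, iidMean]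

lemma abs_poissonExp_sub_le
    (hP1 : ∀ k : ℕ, Measurable fun y : Fin k → Pt d => zeta (Finset.image y Finset.univ))
    (hP2 : ∀ (X : Finset (Pt d)) (x : Pt d), zeta (X.image fun y => x + y) = zeta X)
    (hc1 : 0 ≤ c1) (hc2 : 0 ≤ c2)
    (hP3 : ∀ Y Z : Finset (Pt d), Disjoint Y Z → zeta (Y ∪ Z) ≤ zeta Y + zeta Z + c1)
    (hP4 : ∀ Y Z : Finset (Pt d), Disjoint Y Z →
      zeta Y + zeta Z - c2 * (bdry d Y Z : ℝ) ≤ zeta (Y ∪ Z))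
    {lam lam' s : ℝ} (hlam : 0 ≤ lam) (hle : lam ≤ lam') (hs : 0 < s) :
    |poissonExp d zeta lam' s - poissonExp d zeta lam s|
      ≤ max (c1 + zeta {0}) (c2 - zeta {0}) * (lam' - lam) * s ^ d := by
  set K := max (c1 + zeta {0}) (c2 - zeta {0})
  have := isProbabilityMeasure_unifCube d hs
  have hζ := dist_zeta_insert_le hP2 hc1 hc2 hP3 hP4
  have hK : 0 ≤ K := dist_nonneg.trans (hζ 0 ∅)
  have hstep (k : ℕ) :
      dist (iidMean (unifCube d s) zeta k) (iidMean (unifCube d s) zeta (k + 1)) ≤ K.toNNReal :=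
    (dist_iidMean_succ_le hP1 hζ k).trans (Real.le_coe_toNNReal K)
  have ht : 0 ≤ lam * s ^ d := by positivity
  have ht' : 0 ≤ lam' * s ^ d := by have := hlam.trans hle; positivity
  calc |poissonExp d zeta lam' s - poissonExp d zeta lam s|
      = dist (∫ k, iidMean (unifCube d s) zeta k ∂Po((lam' * s ^ d).toNNReal))
          (∫ k, iidMean (unifCube d s) zeta k ∂Po((lam * s ^ d).toNNReal)) := by
        rw [poissonExp_eq_integral_poissonMeasure ht, poissonExp_eq_integral_poissonMeasure ht',
          Real.dist_eq]
    _ ≤ K.toNNReal * dist (lam' * s ^ d).toNNReal (lam * s ^ d).toNNReal :=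
        (lipschitzWith_integral_poissonMeasure hstep).dist_le_mul _ _
    _ = K * (lam' - lam) * s ^ d := by
        rw [NNReal.dist_eq, Real.coe_toNNReal _ hK, Real.coe_toNNReal _ ht, Real.coe_toNNReal _ ht',
          ← sub_mul, abs_of_nonneg (mul_nonneg (sub_nonneg.mpr hle) (pow_pos hs d).le), mul_assoc]

end Zeta

lemma continuousOn_Ioi_of_abs_mul_sub_le {ρ : ℝ → ℝ} {K : ℝ}
    (h : ∀ x y : ℝ, 0 < x → x ≤ y → |y * ρ y - x * ρ x| ≤ K * (y - x)) :
    ContinuousOn ρ (Set.Ioi 0) := by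
  have hlip : LipschitzOnWith K.toNNReal (fun x => x * ρ x) (Set.Ioi 0) := by
    refine LipschitzOnWith.of_le_add_mul' K fun x hx y hy => ?_
    rw [Real.dist_eq]
    rcases le_total x y with hxy | hyx
    · have := h x y hx hxy
      rw [abs_of_nonpos (sub_nonpos.mpr hxy)]
      linarith [abs_le.mp this]
    · have := h y x hy hyx
      rw [abs_of_nonneg (sub_nonneg.mpr hyx)]
      linarith [abs_le.mp this]
  refine (hlip.continuousOn.div continuousOn_id fun x hx => ne_of_gt hx).congr fun x hx => ?_
  exact (mul_div_cancel_left₀ _ (ne_of_gt hx)).symm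

theorem lambda_rho_lipschitz_general {d : ℕ}
    (zeta : Finset (Pt d) → ℝ)
    -- P1 (measurability)
    (hP1 : ∀ k : ℕ, Measurable fun y : Fin k → Pt d => zeta (Finset.image y Finset.univ))
    -- P2 (translation invariance)
    (hP2 : ∀ (X : Finset (Pt d)) (x : Pt d), zeta (X.image fun y => x + y) = zeta X)
    (c1 c2 : ℝ) (hc1 : 0 ≤ c1) (hc2 : 0 ≤ c2)
    -- P3 (almost subadditivity)
    (hP3 : ∀ Y Z : Finset (Pt d), Disjoint Y Z → zeta (Y ∪ Z) ≤ zeta Y + zeta Z + c1)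
    -- P4 (superadditivity up to boundary)
    (hP4 : ∀ Y Z : Finset (Pt d), Disjoint Y Z →
      zeta Y + zeta Z - c2 * (bdry d Y Z : ℝ) ≤ zeta (Y ∪ Z))
    (ρ : ℝ → ℝ)
    (hρ : ∀ lam : ℝ, 0 < lam →
      Tendsto (fun s : ℝ => poissonExp d zeta lam s / (lam * s ^ d)) atTop
        (nhds (ρ lam))) :
    (∀ lam lam' : ℝ, 0 < lam → lam ≤ lam' →
      |lam' * ρ lam' - lam * ρ lam|
        ≤ max (c1 + zeta {0}) (c2 - zeta {0}) * (lam' - lam)) ∧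
    ContinuousOn ρ (Set.Ioi 0) := by
  have hlim (lam : ℝ) (hlam : 0 < lam) :
      Tendsto (fun s => poissonExp d zeta lam s / s ^ d) atTop (nhds (lam * ρ lam)) :=
    ((hρ lam hlam).const_mul lam).congr fun s => by
      rw [← mul_div_assoc, mul_div_mul_left _ _ hlam.ne']
  have hlip (lam lam' : ℝ) (hlam : 0 < lam) (hle : lam ≤ lam') :
      |lam' * ρ lam' - lam * ρ lam| ≤ max (c1 + zeta {0}) (c2 - zeta {0}) * (lam' - lam) := by
    refine le_of_tendsto ((hlim lam' (hlam.trans_le hle)).sub (hlim lam hlam)).abs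
      ((eventually_gt_atTop 0).mono fun s hs => ?_)
    rw [← sub_div, abs_div, abs_of_pos (pow_pos hs d), div_le_iff₀ (pow_pos hs d)]
    exact abs_poissonExp_sub_le hP1 hP2 hc1 hc2 hP3 hP4 hlam.le hle hs
  exact ⟨hlip, continuousOn_Ioi_of_abs_mul_sub_le hlip⟩

/-- `λ ↦ λ·ρ(λ)` is Lipschitz with constant `K = max(c₁+ζ({o}), c₂−ζ({o}))`,
and `ρ` is continuous on `(0,∞)`. -/
theorem lambda_rho_lipschitz {d : ℕ} (hd : 1 ≤ d)
    (zeta : Finset (Pt d) → ℝ) (hzeta0 : zeta ∅ = 0) (hzetann : ∀ X, 0 ≤ zeta X)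
    -- P1 (measurability)
    (hP1 : ∀ k : ℕ, Measurable fun y : Fin k → Pt d => zeta (Finset.image y Finset.univ))
    -- P2 (translation invariance)
    (hP2 : ∀ (X : Finset (Pt d)) (x : Pt d), zeta (X.image fun y => x + y) = zeta X)
    (c1 c2 : ℝ) (hc1 : 0 ≤ c1) (hc2 : 0 ≤ c2)
    -- P3 (almost subadditivity)
    (hP3 : ∀ Y Z : Finset (Pt d), Disjoint Y Z → zeta (Y ∪ Z) ≤ zeta Y + zeta Z + c1)
    -- P4 (superadditivity up to boundary)
    (hP4 : ∀ Y Z : Finset (Pt d), Disjoint Y Z →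
      zeta Y + zeta Z - c2 * (bdry d Y Z : ℝ) ≤ zeta (Y ∪ Z))
    (ρ : ℝ → ℝ)
    (hρ : ∀ lam : ℝ, 0 < lam →
      Tendsto (fun s : ℝ => poissonExp d zeta lam s / (lam * s ^ d)) atTop
        (nhds (ρ lam))) :
    (∀ lam lam' : ℝ, 0 < lam → lam ≤ lam' →
      |lam' * ρ lam' - lam * ρ lam|
        ≤ max (c1 + zeta {0}) (c2 - zeta {0}) * (lam' - lam)) ∧
    ContinuousOn ρ (Set.Ioi 0) :=
  lambda_rho_lipschitz_general zeta hP1 hP2 c1 c2 hc1 hc2 hP3 hP4 ρ hρ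
end
end

section
/- Let 𝒴 and 𝒵 be finite disjoint subsets of ℝ^d, and write γ(𝒳) := γ(G(𝒳,1)) for the domination number of the geometric graph G(𝒳,1). Then γ(𝒴 ∪ 𝒵) ≥ γ(𝒴) + γ(𝒵) − (1 + κ(B_2(o)))·|∂_𝒵(𝒴)|, where κ(B_2(o)) is the minimum number of closed Euclidean balls of radius 1 needed to cover the closed ball of radius 2 centred at the origin, and ∂_𝒵(𝒴) is the set of points of 𝒴 at Euclidean distance at most 1 from 𝒵. -/
/-!
Take a minimum dominating set `A` of `Y ∪ Z` and let `B = ∂_Z(Y)`. The points of `Y` that `A`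
dominates only from `Z` lie in `B`, so `(A ∩ Y) ∪ B` dominates `Y`. The points of `Z` that `A`
dominates only from `Y` lie within distance `1` of some `a ∈ A ∩ B`. Halving a cover of `B_2(o)`
by `κ(B_2(o))` unit balls covers `B_1(a)` by that many balls of diameter `1`, and one point of `Z`
in each of them dominates `Z ∩ B_1(a)`. Adding up gives
`γ(Y) + γ(Z) ≤ |A| + (1 + κ(B_2(o))) |B|`.
-/

open MeasureTheory ProbabilityTheory Filter Set Metric Bornology
open scoped Classical ENNReal NNReal symmDiff

noncomputable section

section Domination

variable {E : Type*} [PseudoMetricSpace E]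

def Dominates (r : ℝ) (A X : Finset E) : Prop :=
  ∀ x ∈ X, ∃ a ∈ A, dist x a ≤ r

theorem exists_subset_card_le_dominates_of_cover {r : ℝ} (X : Finset E) (P : Finset (Set E))
    (hcover : ∀ x ∈ X, ∃ s ∈ P, x ∈ s) (hdiam : ∀ s ∈ P, ∀ x ∈ s, ∀ y ∈ s, dist x y ≤ r) :
    ∃ D ⊆ X, D.card ≤ P.card ∧ Dominates r D X := by
  choose! piece hpiece_mem hmem_piece using hcover
  obtain ⟨D, hDX, hinj, himage⟩ :=
    Finset.exists_subset_injOn_image_eq_of_surjOn (X : Set E) (X.image piece)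
      (by simpa using Set.surjOn_image piece (X : Set E))
  refine ⟨D, by exact_mod_cast hDX, ?_, fun x hx => ?_⟩
  · calc D.card = (X.image piece).card := by rw [← himage, Finset.card_image_of_injOn hinj]
      _ ≤ P.card := Finset.card_le_card (Finset.image_subset_iff.2 hpiece_mem)
  · obtain ⟨w, hwD, hw⟩ : ∃ w ∈ D, piece w = piece x := by
      rw [← Finset.mem_image, himage]
      exact Finset.mem_image_of_mem piece hx
    refine ⟨w, hwD, hdiam _ (hpiece_mem x hx) x (hmem_piece x hx) w ?_⟩
    rw [← hw]
    exact hmem_piece w (hDX hwD)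

end Domination

theorem two_mul_dist_add_half_smul {V : Type*} [NormedAddCommGroup V] [NormedSpace ℝ V]
    (z a c : V) :
    2 * dist z (a + (2 : ℝ)⁻¹ • c) = dist ((2 : ℝ) • (z - a)) c := by
  have h : (2 : ℝ) • (z - a) - c = (2 : ℝ) • (z - (a + (2 : ℝ)⁻¹ • c)) := by
    rw [smul_sub (2 : ℝ) z (a + _), smul_add, smul_inv_smul₀ (two_ne_zero : (2 : ℝ) ≠ 0), smul_sub]
    abel
  rw [dist_eq_norm, dist_eq_norm, h, norm_smul, Real.norm_two]

variable {d : ℕ}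

theorem domNum_le_card {r : ℝ} {A X : Finset (Pt d)} (hAX : A ⊆ X) (hA : Dominates r A X) :
    domNum d r X ≤ A.card :=
  Nat.sInf_le ⟨A, hAX, rfl, hA⟩

theorem exists_dominates_card_eq_domNum {r : ℝ} (hr : 0 ≤ r) (X : Finset (Pt d)) :
    ∃ A ⊆ X, A.card = domNum d r X ∧ Dominates r A X :=
  Nat.sInf_mem (s := {n | ∃ A ⊆ X, A.card = n ∧ Dominates r A X})
    ⟨X.card, X, subset_rfl, rfl, fun x hx => ⟨x, hx, by simpa using hr⟩⟩

theorem exists_finset_card_eq_covNum {A : Set (Pt d)} (hA : IsBounded A) :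
    ∃ C : Finset (Pt d), C.card = covNum d A ∧ A ⊆ ⋃ x ∈ C, closedBall x 1 := by
  obtain ⟨C, hC⟩ := hA.isCompact_closure.elim_finite_subcover (fun x : Pt d => ball x 1)
    (fun _ => isOpen_ball) fun x _ => Set.mem_iUnion.2 ⟨x, mem_ball_self one_pos⟩
  exact Nat.sInf_mem (s := {n | ∃ C : Finset (Pt d), C.card = n ∧ A ⊆ ⋃ x ∈ C, closedBall x 1})
    ⟨C.card, C, rfl, subset_closure.trans <| hC.trans <|
      Set.iUnion₂_mono fun _ _ => ball_subset_closedBall⟩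

theorem exists_subset_card_le_covNum_dominates_closedBall (Z : Finset (Pt d)) (a : Pt d) :
    ∃ D ⊆ Z, D.card ≤ covNum d (closedBall 0 2) ∧
      Dominates 1 D (Z.filter fun z => dist z a ≤ 1) := by
  obtain ⟨C, hCcard, hC⟩ := exists_finset_card_eq_covNum (isBounded_closedBall (x := (0 : Pt d)))
  set halfBall : Pt d → Set (Pt d) := fun c => closedBall (a + (2 : ℝ)⁻¹ • c) (1 / 2)
  have hcover : ∀ z ∈ Z.filter fun z => dist z a ≤ 1, ∃ s ∈ C.image halfBall, z ∈ s := by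
    intro z hz
    have h2 : (2 : ℝ) • (z - a) ∈ closedBall (0 : Pt d) 2 := by
      rw [mem_closedBall, dist_zero_right, norm_smul, Real.norm_two, ← dist_eq_norm]
      linarith [(Finset.mem_filter.1 hz).2]
    obtain ⟨c, hc, hzc⟩ := Set.mem_iUnion₂.1 (hC h2)
    refine ⟨halfBall c, Finset.mem_image_of_mem _ hc, ?_⟩
    rw [mem_closedBall] at hzc ⊢
    linarith [two_mul_dist_add_half_smul z a c]
  have hdiam : ∀ s ∈ C.image halfBall, ∀ x ∈ s, ∀ y ∈ s, dist x y ≤ 1 := by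
    simp only [Finset.mem_image, forall_exists_index, and_imp]
    rintro _ c _ rfl x hx y hy
    rw [mem_closedBall] at hx hy
    linarith [dist_triangle_right x y (a + (2 : ℝ)⁻¹ • c)]
  obtain ⟨D, hDZ, hDcard, hD⟩ := exists_subset_card_le_dominates_of_cover _ _ hcover hdiam
  exact ⟨D, hDZ.trans (Finset.filter_subset _ _),
    hCcard ▸ hDcard.trans Finset.card_image_le, hD⟩

def bdrySet (Y Z : Finset (Pt d)) : Finset (Pt d) :=
  Y.filter fun y => ∃ z ∈ Z, dist y z ≤ 1

theorem bdry_eq_card_bdrySet (Y Z : Finset (Pt d)) : bdry d Y Z = (bdrySet Y Z).card := by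
  rw [bdry, ← Set.ncard_coe_finset]
  congr 1
  ext y
  simp [bdrySet]

section Restriction

variable {Y Z A : Finset (Pt d)}

theorem domNum_le_card_inter_left_add_bdry (hA : Dominates 1 A (Y ∪ Z)) (hAYZ : A ⊆ Y ∪ Z) :
    domNum d 1 Y ≤ (A ∩ Y).card + bdry d Y Z := by
  rw [bdry_eq_card_bdrySet]
  refine (domNum_le_card (Finset.union_subset Finset.inter_subset_right (Finset.filter_subset _ _))
    fun y hy => ?_).trans (Finset.card_union_le _ _)
  obtain ⟨a, ha, hya⟩ := hA y (Finset.mem_union_left _ hy)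
  rcases Finset.mem_union.1 (hAYZ ha) with haY | haZ
  · exact ⟨a, Finset.mem_union_left _ (Finset.mem_inter.2 ⟨ha, haY⟩), hya⟩
  · refine ⟨y, Finset.mem_union_right _ ?_, by simp⟩
    exact Finset.mem_filter.2 ⟨hy, a, haZ, hya⟩

theorem domNum_le_card_inter_right_add_covNum_mul_bdry (hA : Dominates 1 A (Y ∪ Z))
    (hAYZ : A ⊆ Y ∪ Z) :
    domNum d 1 Z ≤ (A ∩ Z).card + covNum d (closedBall 0 2) * bdry d Y Z := by
  choose! near hnearZ hnear_card hnear using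
    exists_subset_card_le_covNum_dominates_closedBall (d := d) Z
  rw [bdry_eq_card_bdrySet]
  have hdom : Dominates 1 ((A ∩ Z) ∪ (bdrySet Y Z).biUnion near) Z := by
    intro z hz
    obtain ⟨a, ha, hza⟩ := hA z (Finset.mem_union_right _ hz)
    rcases Finset.mem_union.1 (hAYZ ha) with haY | haZ
    · have haB : a ∈ bdrySet Y Z := Finset.mem_filter.2 ⟨haY, z, hz, dist_comm a z ▸ hza⟩
      exact (hnear a z (Finset.mem_filter.2 ⟨hz, hza⟩)).imp fun w hw =>
        ⟨Finset.mem_union_right _ (Finset.mem_biUnion.2 ⟨a, haB, hw.1⟩), hw.2⟩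
    · exact ⟨a, Finset.mem_union_left _ (Finset.mem_inter.2 ⟨ha, haZ⟩), hza⟩
  have hsub : (A ∩ Z) ∪ (bdrySet Y Z).biUnion near ⊆ Z :=
    Finset.union_subset Finset.inter_subset_right (Finset.biUnion_subset.2 fun a _ => hnearZ a)
  calc domNum d 1 Z ≤ ((A ∩ Z) ∪ (bdrySet Y Z).biUnion near).card := domNum_le_card hsub hdom
    _ ≤ (A ∩ Z).card + ∑ a ∈ bdrySet Y Z, (near a).card :=
      (Finset.card_union_le _ _).trans (Nat.add_le_add_left Finset.card_biUnion_le _)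
    _ ≤ (A ∩ Z).card + covNum d (closedBall 0 2) * (bdrySet Y Z).card := by
      grw [Finset.sum_le_card_nsmul _ _ _ fun a _ => hnear_card a, smul_eq_mul, mul_comm]

end Restriction

/-- superadditivity up to boundary for the domination number of the RGG. -/
theorem domination_number_superadd {d : ℕ}
    (Y Z : Finset (Pt d)) (hYZ : Disjoint Y Z) :
    (domNum d 1 Y : ℝ) + (domNum d 1 Z : ℝ)
        - (1 + (covNum d (Metric.closedBall (0 : Pt d) 2) : ℝ)) * (bdry d Y Z : ℝ)
      ≤ (domNum d 1 (Y ∪ Z) : ℝ) := by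
  obtain ⟨A, hAYZ, hAcard, hA⟩ := exists_dominates_card_eq_domNum zero_le_one (Y ∪ Z)
  have hY := domNum_le_card_inter_left_add_bdry hA hAYZ
  have hZ := domNum_le_card_inter_right_add_covNum_mul_bdry hA hAYZ
  have hsplit : (A ∩ Y).card + (A ∩ Z).card = A.card := by
    rw [← Finset.card_union_of_disjoint (hYZ.mono Finset.inter_subset_right
      Finset.inter_subset_right), ← Finset.inter_union_distrib_left, Finset.inter_eq_left.2 hAYZ]
  have hsum : domNum d 1 Y + domNum d 1 Z
      ≤ domNum d 1 (Y ∪ Z) + (1 + covNum d (closedBall 0 2)) * bdry d Y Z := by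
    rw [← hAcard, ← hsplit]
    linarith
  rw [sub_le_iff_le_add]
  exact_mod_cast hsum

end
end

section
/- Let 𝒴 and 𝒵 be finite disjoint subsets of ℝ^d, and write θ(𝒳) := θ(G(𝒳,1)) for the clique-covering number of the geometric graph G(𝒳,1). Then θ(𝒴 ∪ 𝒵) ≤ θ(𝒴) + θ(𝒵), and θ(𝒴) + θ(𝒵) ≤ θ(𝒴 ∪ 𝒵) + |∂_𝒵(𝒴)|, where ∂_𝒵(𝒴) is the set of points of 𝒴 at Euclidean distance at most 1 from 𝒵. -/
open MeasureTheory ProbabilityTheory Filter Set Metric Bornology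
open scoped Classical ENNReal NNReal symmDiff

noncomputable section

/-- A valid clique cover. -/
def IsCov (d : ℕ) (X : Finset (Pt d)) (P : Finset (Finset (Pt d))) : Prop :=
  (∀ C ∈ P, C ⊆ X ∧ C.Nonempty ∧ ∀ x ∈ C, ∀ y ∈ C, x ≠ y → dist x y ≤ 1) ∧
    ∀ x ∈ X, ∃! C, C ∈ P ∧ x ∈ C

lemma ccn_le {d : ℕ} (X : Finset (Pt d)) (P : Finset (Finset (Pt d)))
    (h : IsCov d X P) : cliqueCoverNum d 1 X ≤ P.card :=
  Nat.sInf_le ⟨P, rfl, h.1, h.2⟩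

lemma isCov_singletons {d : ℕ} (X : Finset (Pt d)) :
    IsCov d X (X.image fun x => ({x} : Finset (Pt d))) := by
  constructor
  · intro C hC
    obtain ⟨x, hx, rfl⟩ := Finset.mem_image.1 hC
    refine ⟨Finset.singleton_subset_iff.2 hx, ⟨x, Finset.mem_singleton_self x⟩, ?_⟩
    intro a ha b hb hab
    rw [Finset.mem_singleton] at ha hb
    exact absurd (ha.trans hb.symm) hab
  · intro x hx
    refine ⟨{x}, ⟨Finset.mem_image_of_mem _ hx, Finset.mem_singleton_self x⟩, ?_⟩
    rintro C ⟨hC, hxC⟩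
    obtain ⟨y, _, rfl⟩ := Finset.mem_image.1 hC
    rw [Finset.mem_singleton] at hxC
    rw [hxC]

lemma ccn_spec {d : ℕ} (X : Finset (Pt d)) :
    ∃ P : Finset (Finset (Pt d)), P.card = cliqueCoverNum d 1 X ∧ IsCov d X P := by
  have hne : {n | ∃ P : Finset (Finset (Pt d)), P.card = n ∧
      (∀ C ∈ P, C ⊆ X ∧ C.Nonempty ∧ ∀ x ∈ C, ∀ y ∈ C, x ≠ y → dist x y ≤ 1) ∧
      ∀ x ∈ X, ∃! C, C ∈ P ∧ x ∈ C}.Nonempty := by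
    refine ⟨(X.image fun x => ({x} : Finset (Pt d))).card, X.image fun x => ({x} : Finset (Pt d)), rfl, ?_, ?_⟩
    · exact (isCov_singletons X).1
    · exact (isCov_singletons X).2
  obtain ⟨P, hcard, h1, h2⟩ := Nat.sInf_mem hne
  exact ⟨P, hcard, h1, h2⟩

/-- sub/superadditivity of the clique-covering number of the RGG. -/
theorem clique_cover_number_subadd_superadd {d : ℕ}
    (Y Z : Finset (Pt d)) (hYZ : Disjoint Y Z) :
    cliqueCoverNum d 1 (Y ∪ Z) ≤ cliqueCoverNum d 1 Y + cliqueCoverNum d 1 Z ∧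
    cliqueCoverNum d 1 Y + cliqueCoverNum d 1 Z
      ≤ cliqueCoverNum d 1 (Y ∪ Z) + bdry d Y Z := by
  obtain ⟨PY, hPYcard, hPYclq, hPYcov⟩ := ccn_spec Y
  obtain ⟨PZ, hPZcard, hPZclq, hPZcov⟩ := ccn_spec Z
  obtain ⟨P, hPcard, hPclq, hPcov⟩ := ccn_spec (Y ∪ Z)
  constructor
  · -- subadditivity
    have hcov : IsCov d (Y ∪ Z) (PY ∪ PZ) := by
      constructor
      · intro C hC
        rcases Finset.mem_union.1 hC with h | h
        · obtain ⟨h1, h2, h3⟩ := hPYclq C h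
          exact ⟨h1.trans Finset.subset_union_left, h2, h3⟩
        · obtain ⟨h1, h2, h3⟩ := hPZclq C h
          exact ⟨h1.trans Finset.subset_union_right, h2, h3⟩
      · intro x hx
        rcases Finset.mem_union.1 hx with hx | hx
        · obtain ⟨C, ⟨hC, hxC⟩, huniq⟩ := hPYcov x hx
          refine ⟨C, ⟨Finset.mem_union_left _ hC, hxC⟩, ?_⟩
          rintro D ⟨hD, hxD⟩
          rcases Finset.mem_union.1 hD with hD | hD
          · exact huniq D ⟨hD, hxD⟩
          · exact absurd ((hPZclq D hD).1 hxD) (Finset.disjoint_left.1 hYZ hx)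
        · obtain ⟨C, ⟨hC, hxC⟩, huniq⟩ := hPZcov x hx
          refine ⟨C, ⟨Finset.mem_union_right _ hC, hxC⟩, ?_⟩
          rintro D ⟨hD, hxD⟩
          rcases Finset.mem_union.1 hD with hD | hD
          · exact absurd ((hPYclq D hD).1 hxD) (Finset.disjoint_right.1 hYZ hx)
          · exact huniq D ⟨hD, hxD⟩
    calc cliqueCoverNum d 1 (Y ∪ Z) ≤ (PY ∪ PZ).card := ccn_le _ _ hcov
      _ ≤ PY.card + PZ.card := Finset.card_union_le _ _
      _ = _ := by rw [hPYcard, hPZcard]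
  · -- superadditivity
    set QY := (P.image fun C => C ∩ Y).filter Finset.Nonempty with hQY
    set QZ := (P.image fun C => C ∩ Z).filter Finset.Nonempty with hQZ
    set FY := P.filter fun C => (C ∩ Y).Nonempty with hFY
    set FZ := P.filter fun C => (C ∩ Z).Nonempty with hFZ
    have hcovY : IsCov d Y QY := by
      constructor
      · intro C' hC'
        obtain ⟨hC'mem, hC'ne⟩ := Finset.mem_filter.1 hC'
        obtain ⟨C, hC, rfl⟩ := Finset.mem_image.1 hC'mem
        obtain ⟨_, _, hclq⟩ := hPclq C hC
        exact ⟨Finset.inter_subset_right, hC'ne, fun x hx y hy hxy =>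
          hclq x (Finset.mem_of_mem_inter_left hx) y (Finset.mem_of_mem_inter_left hy) hxy⟩
      · intro y hy
        obtain ⟨C, ⟨hC, hyC⟩, huniq⟩ := hPcov y (Finset.mem_union_left _ hy)
        have hyCY : y ∈ C ∩ Y := Finset.mem_inter.2 ⟨hyC, hy⟩
        refine ⟨C ∩ Y, ⟨Finset.mem_filter.2 ⟨Finset.mem_image_of_mem _ hC, ⟨y, hyCY⟩⟩, hyCY⟩, ?_⟩
        rintro C'' ⟨hC'', hyC''⟩
        obtain ⟨hmem, _⟩ := Finset.mem_filter.1 hC''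
        obtain ⟨D, hD, rfl⟩ := Finset.mem_image.1 hmem
        rw [huniq D ⟨hD, Finset.mem_of_mem_inter_left hyC''⟩]
    have hcovZ : IsCov d Z QZ := by
      constructor
      · intro C' hC'
        obtain ⟨hC'mem, hC'ne⟩ := Finset.mem_filter.1 hC'
        obtain ⟨C, hC, rfl⟩ := Finset.mem_image.1 hC'mem
        obtain ⟨_, _, hclq⟩ := hPclq C hC
        exact ⟨Finset.inter_subset_right, hC'ne, fun x hx y hy hxy =>
          hclq x (Finset.mem_of_mem_inter_left hx) y (Finset.mem_of_mem_inter_left hy) hxy⟩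
      · intro z hz
        obtain ⟨C, ⟨hC, hzC⟩, huniq⟩ := hPcov z (Finset.mem_union_right _ hz)
        have hzCZ : z ∈ C ∩ Z := Finset.mem_inter.2 ⟨hzC, hz⟩
        refine ⟨C ∩ Z, ⟨Finset.mem_filter.2 ⟨Finset.mem_image_of_mem _ hC, ⟨z, hzCZ⟩⟩, hzCZ⟩, ?_⟩
        rintro C'' ⟨hC'', hzC''⟩
        obtain ⟨hmem, _⟩ := Finset.mem_filter.1 hC''
        obtain ⟨D, hD, rfl⟩ := Finset.mem_image.1 hmem
        rw [huniq D ⟨hD, Finset.mem_of_mem_inter_left hzC''⟩]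
    -- card bounds: QY.card ≤ FY.card
    have hQYFY : QY.card ≤ FY.card := by
      have hsub : QY ⊆ FY.image fun C => C ∩ Y := by
        intro C' hC'
        obtain ⟨hmem, hne⟩ := Finset.mem_filter.1 hC'
        obtain ⟨C, hC, rfl⟩ := Finset.mem_image.1 hmem
        exact Finset.mem_image_of_mem _ (Finset.mem_filter.2 ⟨hC, hne⟩)
      exact (Finset.card_le_card hsub).trans (Finset.card_image_le)
    have hQZFZ : QZ.card ≤ FZ.card := by
      have hsub : QZ ⊆ FZ.image fun C => C ∩ Z := by
        intro C' hC'
        obtain ⟨hmem, hne⟩ := Finset.mem_filter.1 hC'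
        obtain ⟨C, hC, rfl⟩ := Finset.mem_image.1 hmem
        exact Finset.mem_image_of_mem _ (Finset.mem_filter.2 ⟨hC, hne⟩)
      exact (Finset.card_le_card hsub).trans (Finset.card_image_le)
    -- bdry as a Finset card
    have hbdry : bdry d Y Z = (Y.filter fun y => ∃ z ∈ Z, dist y z ≤ 1).card := by
      rw [bdry, ← Set.ncard_coe_finset]
      congr 1
      ext y
      simp [Finset.mem_filter]
    -- |FY ∩ FZ| ≤ bdry
    have hB : (FY ∩ FZ).card ≤ bdry d Y Z := by
      rw [hbdry]
      set f : Finset (Pt d) → Pt d :=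
        fun C => if h : (C ∩ Y).Nonempty then h.choose else 0 with hf
      apply Finset.card_le_card_of_injOn f
      · intro C hC
        obtain ⟨hCY, hCZ⟩ := Finset.mem_inter.1 hC
        obtain ⟨hCP, hy⟩ := Finset.mem_filter.1 hCY
        obtain ⟨_, hz⟩ := Finset.mem_filter.1 hCZ
        have hfC : f C = hy.choose := dif_pos hy
        have hyC : hy.choose ∈ C ∩ Y := hy.choose_spec
        have hzC : hz.choose ∈ C ∩ Z := hz.choose_spec
        obtain ⟨_, _, hclq⟩ := hPclq C hCP
        have hne : hy.choose ≠ hz.choose := by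
          intro heq
          exact Finset.disjoint_left.1 hYZ (Finset.mem_of_mem_inter_right hyC)
            (heq ▸ Finset.mem_of_mem_inter_right hzC)
        refine Finset.mem_filter.2 ⟨?_, ⟨hz.choose, Finset.mem_of_mem_inter_right hzC, ?_⟩⟩
        · rw [hfC]; exact Finset.mem_of_mem_inter_right hyC
        · rw [hfC]
          exact hclq _ (Finset.mem_of_mem_inter_left hyC) _
            (Finset.mem_of_mem_inter_left hzC) hne
      · intro C hC D hD hfCD
        obtain ⟨hCY, _⟩ := Finset.mem_inter.1 hC
        obtain ⟨hDY, _⟩ := Finset.mem_inter.1 hD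
        obtain ⟨hCP, hyC⟩ := Finset.mem_filter.1 hCY
        obtain ⟨hDP, hyD⟩ := Finset.mem_filter.1 hDY
        have hfC : f C = hyC.choose := dif_pos hyC
        have hfD : f D = hyD.choose := dif_pos hyD
        have hmemC : f C ∈ C ∩ Y := hfC ▸ hyC.choose_spec
        have hmemD : f C ∈ D ∩ Y := by rw [hfCD, hfD]; exact hyD.choose_spec
        have hmem : f C ∈ Y ∪ Z :=
          Finset.mem_union_left _ (Finset.mem_of_mem_inter_right hmemC)
        obtain ⟨E, _, huniq⟩ := hPcov (f C) hmem
        rw [huniq C ⟨hCP, Finset.mem_of_mem_inter_left hmemC⟩,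
          huniq D ⟨hDP, Finset.mem_of_mem_inter_left hmemD⟩]
    calc cliqueCoverNum d 1 Y + cliqueCoverNum d 1 Z
        ≤ QY.card + QZ.card := Nat.add_le_add (ccn_le _ _ hcovY) (ccn_le _ _ hcovZ)
      _ ≤ FY.card + FZ.card := Nat.add_le_add hQYFY hQZFZ
      _ = (FY ∪ FZ).card + (FY ∩ FZ).card := (Finset.card_union_add_card_inter _ _).symm
      _ ≤ P.card + bdry d Y Z := Nat.add_le_add
          (Finset.card_le_card (Finset.union_subset (Finset.filter_subset _ _)
            (Finset.filter_subset _ _))) hB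
      _ = _ := by rw [hPcard]
end
end

section
/- Let 𝒴 and 𝒵 be finite disjoint subsets of ℝ^d, and write τ(𝒳) for the vertex cover number of the geometric graph G(𝒳,1). Then τ(𝒴) + τ(𝒵) ≤ τ(𝒴 ∪ 𝒵), and τ(𝒴 ∪ 𝒵) ≤ τ(𝒴) + τ(𝒵) + |∂_𝒵(𝒴)|, where ∂_𝒵(𝒴) is the set of points of 𝒴 at Euclidean distance at most 1 from 𝒵. -/
open MeasureTheory ProbabilityTheory Filter Set Metric Bornology
open scoped Classical ENNReal NNReal symmDiff

noncomputable section

def IsGeomVertexCover {α : Type*} [PseudoMetricSpace α] (r : ℝ) (X A : Finset α) : Prop :=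
  ∀ x ∈ X, ∀ y ∈ X, x ≠ y → dist x y ≤ r → x ∈ A ∨ y ∈ A

section IsGeomVertexCover

variable {α : Type*} [PseudoMetricSpace α] [DecidableEq α] {r : ℝ} {X Y Z A B : Finset α}

theorem IsGeomVertexCover.inter_of_subset (hA : IsGeomVertexCover r X A) (hYX : Y ⊆ X) :
    IsGeomVertexCover r Y (A ∩ Y) := by
  intro x hx y hy hxy hd
  rcases hA x (hYX hx) y (hYX hy) hxy hd with h | h
  · exact Or.inl (Finset.mem_inter.mpr ⟨h, hx⟩)
  · exact Or.inr (Finset.mem_inter.mpr ⟨h, hy⟩)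

/-- Edges inside `Y` or inside `Z` are covered by `A` or `B`; every edge between `Y` and `Z`
has its `Y`-endpoint within distance `r` of `Z`. -/
theorem IsGeomVertexCover.union_filter (hA : IsGeomVertexCover r Y A)
    (hB : IsGeomVertexCover r Z B) :
    IsGeomVertexCover r (Y ∪ Z) (A ∪ B ∪ Y.filter fun y => ∃ z ∈ Z, dist y z ≤ r) := by
  intro x hx y hy hxy hd
  simp only [Finset.mem_union, Finset.mem_filter] at hx hy ⊢
  rcases hx with hx | hx <;> rcases hy with hy | hy
  · rcases hA x hx y hy hxy hd with h | h <;> simp [h]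
  · exact Or.inl (Or.inr ⟨hx, y, hy, hd⟩)
  · exact Or.inr (Or.inr ⟨hy, x, hx, dist_comm x y ▸ hd⟩)
  · rcases hB x hx y hy hxy hd with h | h <;> simp [h]

end IsGeomVertexCover

section vcNum

variable {d : ℕ} {r : ℝ} {X Y Z A : Finset (Pt d)}

theorem vcNum_le_card (hAX : A ⊆ X) (hA : IsGeomVertexCover r X A) : vcNum d r X ≤ A.card :=
  Nat.sInf_le ⟨A, hAX, rfl, hA⟩

theorem exists_isGeomVertexCover_card_eq_vcNum (d : ℕ) (r : ℝ) (X : Finset (Pt d)) :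
    ∃ A ⊆ X, A.card = vcNum d r X ∧ IsGeomVertexCover r X A :=
  Nat.sInf_mem (s := {n | ∃ A ⊆ X, A.card = n ∧ IsGeomVertexCover r X A})
    ⟨X.card, X, subset_rfl, rfl, fun _ hx _ _ _ _ => Or.inl hx⟩

/-- A minimum cover of `Y ∪ Z` splits into covers of `Y` and of `Z`, disjoint since `Y` and `Z`
are. -/
theorem vcNum_add_vcNum_le_vcNum_union (hYZ : Disjoint Y Z) :
    vcNum d r Y + vcNum d r Z ≤ vcNum d r (Y ∪ Z) := by
  obtain ⟨A, -, hAcard, hA⟩ := exists_isGeomVertexCover_card_eq_vcNum d r (Y ∪ Z)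
  calc vcNum d r Y + vcNum d r Z ≤ (A ∩ Y).card + (A ∩ Z).card :=
        add_le_add
          (vcNum_le_card Finset.inter_subset_right (hA.inter_of_subset Finset.subset_union_left))
          (vcNum_le_card Finset.inter_subset_right (hA.inter_of_subset Finset.subset_union_right))
    _ = (A ∩ Y ∪ A ∩ Z).card :=
        (Finset.card_union_of_disjoint
          (hYZ.mono Finset.inter_subset_right Finset.inter_subset_right)).symm
    _ ≤ A.card := Finset.card_le_card (Finset.union_subset Finset.inter_subset_left
        Finset.inter_subset_left)
    _ = vcNum d r (Y ∪ Z) := hAcard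

theorem vcNum_union_le (Y Z : Finset (Pt d)) :
    vcNum d r (Y ∪ Z) ≤
      vcNum d r Y + vcNum d r Z + (Y.filter fun y => ∃ z ∈ Z, dist y z ≤ r).card := by
  obtain ⟨A, hAY, hAcard, hA⟩ := exists_isGeomVertexCover_card_eq_vcNum d r Y
  obtain ⟨B, hBZ, hBcard, hB⟩ := exists_isGeomVertexCover_card_eq_vcNum d r Z
  set S := Y.filter fun y => ∃ z ∈ Z, dist y z ≤ r
  have hsub : A ∪ B ∪ S ⊆ Y ∪ Z :=
    Finset.union_subset (Finset.union_subset_union hAY hBZ)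
      ((Finset.filter_subset _ _).trans Finset.subset_union_left)
  calc vcNum d r (Y ∪ Z) ≤ (A ∪ B ∪ S).card := vcNum_le_card hsub (hA.union_filter hB)
    _ ≤ A.card + B.card + S.card :=
        (Finset.card_union_le _ _).trans (Nat.add_le_add_right (Finset.card_union_le _ _) _)
    _ = vcNum d r Y + vcNum d r Z + S.card := by rw [hAcard, hBcard]

theorem bdry_eq_card_filter (Y Z : Finset (Pt d)) :
    bdry d Y Z = (Y.filter fun y => ∃ z ∈ Z, dist y z ≤ 1).card := by
  rw [bdry, ← Set.ncard_coe_finset, Finset.coe_filter]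
  rfl

end vcNum

/-- sub/superadditivity of the vertex cover number of the RGG. -/
theorem vertex_cover_number_superadd_subadd {d : ℕ}
    (Y Z : Finset (Pt d)) (hYZ : Disjoint Y Z) :
    vcNum d 1 Y + vcNum d 1 Z ≤ vcNum d 1 (Y ∪ Z) ∧
    vcNum d 1 (Y ∪ Z) ≤ vcNum d 1 Y + vcNum d 1 Z + bdry d Y Z :=
  ⟨vcNum_add_vcNum_le_vcNum_union hYZ, bdry_eq_card_filter Y Z ▸ vcNum_union_le Y Z⟩

end
end

section
/- Let 𝒴 and 𝒵 be finite disjoint subsets of ℝ^d, and write σ(𝒳) for the number of isolated vertices of the geometric graph G(𝒳,1). Then σ(𝒴 ∪ 𝒵) ≤ σ(𝒴) + σ(𝒵), and σ(𝒴 ∪ 𝒵) ≥ σ(𝒴) + σ(𝒵) − (1 + 3^d)·|∂_𝒵(𝒴)|, where ∂_𝒵(𝒴) is the set of points of 𝒴 at Euclidean distance at most 1 from 𝒵. -/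
open MeasureTheory ProbabilityTheory Filter Set Metric Bornology
open scoped Classical ENNReal NNReal symmDiff

noncomputable section

lemma pack_lemma {d : ℕ} (y : Pt d) (S : Finset (Pt d))
    (h1 : ∀ z ∈ S, dist z y ≤ 1)
    (h2 : ∀ a ∈ S, ∀ b ∈ S, a ≠ b → 1 < dist a b) :
    S.card ≤ 3 ^ d := by
  have hd : Module.finrank ℝ (Pt d) = d := finrank_euclideanSpace_fin
  set μ : Measure (Pt d) := volume with hμ
  have hdisj : (S : Set (Pt d)).PairwiseDisjoint fun z => Metric.closedBall z (1/2) := by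
    intro a ha b hb hab
    exact closedBall_disjoint_closedBall (by linarith [h2 a ha b hb hab])
  have hsub : (⋃ z ∈ S, Metric.closedBall z (1/2)) ⊆ Metric.closedBall y (3/2) := by
    intro w hw
    simp only [mem_iUnion] at hw
    obtain ⟨z, hz, hwz⟩ := hw
    have := h1 z hz
    simp only [mem_closedBall] at *
    calc dist w y ≤ dist w z + dist z y := dist_triangle _ _ _
      _ ≤ 3/2 := by linarith
  have hμu : μ (⋃ z ∈ S, Metric.closedBall z (1/2)) = S.card * μ (Metric.closedBall (0:Pt d) (1/2)) := by
    rw [measure_biUnion_finset hdisj (fun z _ => measurableSet_closedBall)]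
    simp [μ.addHaar_closedBall_center, Finset.sum_const, nsmul_eq_mul]
  have key : (S.card : ℝ≥0∞) * μ (Metric.closedBall (0:Pt d) (1/2)) ≤ μ (Metric.closedBall (0:Pt d) (3/2)) := by
    rw [← hμu, ← μ.addHaar_closedBall_center y]
    exact measure_mono hsub
  have e1 : μ (Metric.closedBall (0:Pt d) (1/2)) = ENNReal.ofReal ((1/2:ℝ) ^ d) * μ (Metric.ball 0 1) := by
    rw [μ.addHaar_closedBall _ (by norm_num : (0:ℝ) ≤ 1/2), hd]
  have e2 : μ (Metric.closedBall (0:Pt d) (3/2)) = ENNReal.ofReal ((3/2:ℝ) ^ d) * μ (Metric.ball 0 1) := by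
    rw [μ.addHaar_closedBall _ (by norm_num : (0:ℝ) ≤ 3/2), hd]
  have e3 : ENNReal.ofReal ((3/2:ℝ) ^ d) = (3^d : ℕ) * ENNReal.ofReal ((1/2:ℝ) ^ d) := by
    rw [← ENNReal.ofReal_natCast, ← ENNReal.ofReal_mul (by positivity)]
    congr 1
    push_cast
    rw [← mul_pow]
    norm_num
  rw [e1, e2, e3] at key
  have hb0 : μ (Metric.ball (0:Pt d) 1) ≠ 0 := (measure_ball_pos μ 0 one_pos).ne'
  have hbt : μ (Metric.ball (0:Pt d) 1) ≠ ⊤ := measure_ball_lt_top.ne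
  have hc0 : ENNReal.ofReal ((1/2:ℝ) ^ d) ≠ 0 := (ENNReal.ofReal_pos.mpr (by positivity)).ne'
  have hct : ENNReal.ofReal ((1/2:ℝ) ^ d) ≠ ⊤ := ENNReal.ofReal_ne_top
  have hfin : (S.card : ℝ≥0∞) ≤ (3^d : ℕ) := by
    have h := key
    rw [← mul_assoc] at h
    have h2' := (ENNReal.mul_le_mul_iff_left hb0 hbt).mp h
    exact (ENNReal.mul_le_mul_iff_left hc0 hct).mp h2'
  exact_mod_cast hfin

/-- sub/superadditivity of the number of isolated vertices of the RGG. -/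
theorem isolated_count_subadd_superadd {d : ℕ}
    (Y Z : Finset (Pt d)) (hYZ : Disjoint Y Z) :
    isolCount d 1 (Y ∪ Z) ≤ isolCount d 1 Y + isolCount d 1 Z ∧
    (isolCount d 1 Y : ℝ) + (isolCount d 1 Z : ℝ)
        - (1 + (3 : ℝ) ^ d) * (bdry d Y Z : ℝ)
      ≤ (isolCount d 1 (Y ∪ Z) : ℝ) := by
  classical
  have hIso : ∀ X : Finset (Pt d), isolCount d 1 X =
      (X.filter fun x => ∀ y ∈ X, y ≠ x → 1 < dist x y).card := by
    intro X
    rw [isolCount, ← Set.ncard_coe_finset]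
    congr 1
    ext x
    simp [Set.mem_sep_iff]
  have hBe : bdry d Y Z = (Y.filter fun y => ∃ z ∈ Z, dist y z ≤ 1).card := by
    rw [bdry, ← Set.ncard_coe_finset]
    congr 1
    ext x
    simp
  rw [hIso Y, hIso Z, hIso (Y ∪ Z), hBe]
  set IY := Y.filter (fun x => ∀ y ∈ Y, y ≠ x → 1 < dist x y) with hIY
  set IZ := Z.filter (fun x => ∀ y ∈ Z, y ≠ x → 1 < dist x y) with hIZ
  set IU := (Y ∪ Z).filter (fun x => ∀ y ∈ Y ∪ Z, y ≠ x → 1 < dist x y) with hIU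
  set B := Y.filter (fun y => ∃ z ∈ Z, dist y z ≤ 1) with hBdef
  constructor
  · -- upper bound
    have hsub1 : IU ⊆ IY ∪ IZ := by
      intro x hx
      simp only [hIU, hIY, hIZ, Finset.mem_filter, Finset.mem_union] at hx ⊢
      obtain ⟨hxu, hP⟩ := hx
      rcases hxu with h | h
      · exact Or.inl ⟨h, fun y hy hne => hP y (Or.inl hy) hne⟩
      · exact Or.inr ⟨h, fun y hy hne => hP y (Or.inr hy) hne⟩
    exact le_trans (Finset.card_le_card hsub1) (Finset.card_union_le _ _)
  · -- lower bound
    set D := IZ.filter (fun x => ¬ ∀ y ∈ Y ∪ Z, y ≠ x → 1 < dist x y) with hDdef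
    have hYIU : IY ⊆ IU.filter (· ∈ Y) ∪ B := by
      intro x hx
      simp only [hIY, Finset.mem_filter] at hx
      obtain ⟨hxY, hP⟩ := hx
      by_cases hU : ∀ y ∈ Y ∪ Z, y ≠ x → 1 < dist x y
      · apply Finset.mem_union_left
        simp only [hIU, Finset.mem_filter]
        exact ⟨⟨Finset.mem_union_left _ hxY, hU⟩, hxY⟩
      · push_neg at hU
        obtain ⟨u, hu, hne, hd⟩ := hU
        rcases Finset.mem_union.mp hu with h | h
        · exact absurd (hP u h hne) (not_lt.mpr hd)
        · apply Finset.mem_union_right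
          simp only [hBdef, Finset.mem_filter]
          exact ⟨hxY, u, h, hd⟩
    have hZIU : IZ ⊆ IU.filter (· ∈ Z) ∪ D := by
      intro x hx
      have hx' := hx
      simp only [hIZ, Finset.mem_filter] at hx'
      obtain ⟨hxZ, hP⟩ := hx'
      by_cases hU : ∀ y ∈ Y ∪ Z, y ≠ x → 1 < dist x y
      · apply Finset.mem_union_left
        simp only [hIU, Finset.mem_filter]
        exact ⟨⟨Finset.mem_union_right _ hxZ, hU⟩, hxZ⟩
      · apply Finset.mem_union_right
        simp only [hDdef, Finset.mem_filter]
        exact ⟨hx, hU⟩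
    have hDex : ∀ z ∈ D, ∃ y ∈ B, dist z y ≤ 1 := by
      intro z hz
      simp only [hDdef, hIZ, Finset.mem_filter] at hz
      obtain ⟨⟨hzZ, hPz⟩, hnP⟩ := hz
      push_neg at hnP
      obtain ⟨u, hu, hne, hd⟩ := hnP
      rcases Finset.mem_union.mp hu with h | h
      · refine ⟨u, ?_, hd⟩
        simp only [hBdef, Finset.mem_filter]
        exact ⟨h, z, hzZ, by rw [dist_comm]; exact hd⟩
      · exact absurd (hPz u h hne) (not_lt.mpr hd)
    set f : Pt d → Pt d := fun z => if h : ∃ y ∈ B, dist z y ≤ 1 then h.choose else z with hfdef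
    have hf : ∀ z ∈ D, f z ∈ B ∧ dist z (f z) ≤ 1 := by
      intro z hz
      have h := hDex z hz
      simp only [hfdef, dif_pos h]
      exact ⟨h.choose_spec.1, h.choose_spec.2⟩
    have hDcard : D.card = ∑ y ∈ B, (D.filter fun z => f z = y).card :=
      Finset.card_eq_sum_card_fiberwise (fun z hz => (hf z hz).1)
    have hfiber : ∀ y ∈ B, (D.filter fun z => f z = y).card ≤ 3 ^ d := by
      intro y hy
      apply pack_lemma y
      · intro z hz
        simp only [Finset.mem_filter] at hz
        have h := (hf z hz.1).2
        rw [hz.2] at h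
        exact h
      · intro a ha b hb hab
        simp only [Finset.mem_filter, hDdef, hIZ] at ha hb
        exact ha.1.1.2 b hb.1.1.1 hab.symm
    have hD : D.card ≤ 3 ^ d * B.card := by
      rw [hDcard]
      calc ∑ y ∈ B, (D.filter fun z => f z = y).card ≤ ∑ _y ∈ B, 3 ^ d :=
            Finset.sum_le_sum hfiber
        _ = 3 ^ d * B.card := by rw [Finset.sum_const, smul_eq_mul, mul_comm]
    have hdisjUY : Disjoint (IU.filter (· ∈ Y)) (IU.filter (· ∈ Z)) := by
      rw [Finset.disjoint_left]
      intro a ha hb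
      simp only [Finset.mem_filter] at ha hb
      exact (Finset.disjoint_left.mp hYZ ha.2) hb.2
    have hsum : (IU.filter (· ∈ Y)).card + (IU.filter (· ∈ Z)).card ≤ IU.card := by
      rw [← Finset.card_union_of_disjoint hdisjUY]
      exact Finset.card_le_card
        (Finset.union_subset (Finset.filter_subset _ _) (Finset.filter_subset _ _))
    have h1 : IY.card ≤ (IU.filter (· ∈ Y)).card + B.card :=
      le_trans (Finset.card_le_card hYIU) (Finset.card_union_le _ _)
    have h2 : IZ.card ≤ (IU.filter (· ∈ Z)).card + D.card :=
      le_trans (Finset.card_le_card hZIU) (Finset.card_union_le _ _)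
    have natkey : IY.card + IZ.card ≤ IU.card + B.card + 3 ^ d * B.card := by omega
    have rkey : (IY.card : ℝ) + IZ.card ≤ IU.card + B.card + 3 ^ d * B.card := by
      exact_mod_cast natkey
    push_cast at rkey ⊢
    linarith
end
end

section
/- Suppose ζ satisfies Properties P2, P3 and P4, and let K := max(c₁ + ζ({o}), c₂ − ζ({o})), where c₁, c₂ are the constants in P3 and P4. Then for all finite sets 𝒳, 𝒴 ⊂ ℝ^d and all r > 0, |ζ_r(𝒴) − ζ_r(𝒳)| ≤ K·|𝒴 △ 𝒳|, where 𝒴 △ 𝒳 denotes the symmetric difference and ζ_r(𝒳) := ζ(r^{-1}𝒳). -/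
open MeasureTheory ProbabilityTheory Filter Set Metric Bornology
open scoped Classical ENNReal NNReal symmDiff

noncomputable section

/-- smoothness of `ζ_r` under Properties P2–P4. -/
theorem smoothness_of_zeta {d : ℕ}
    (zeta : Finset (Pt d) → ℝ) (hzeta0 : zeta ∅ = 0) (hzetann : ∀ X, 0 ≤ zeta X)
    -- P2 (translation invariance)
    (hP2 : ∀ (X : Finset (Pt d)) (x : Pt d), zeta (X.image fun y => x + y) = zeta X)
    (c1 c2 : ℝ) (hc1 : 0 ≤ c1) (hc2 : 0 ≤ c2)
    -- P3 (almost subadditivity)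
    (hP3 : ∀ Y Z : Finset (Pt d), Disjoint Y Z → zeta (Y ∪ Z) ≤ zeta Y + zeta Z + c1)
    -- P4 (superadditivity up to boundary)
    (hP4 : ∀ Y Z : Finset (Pt d), Disjoint Y Z →
      zeta Y + zeta Z - c2 * (bdry d Y Z : ℝ) ≤ zeta (Y ∪ Z))
    (K : ℝ) (hK : K = max (c1 + zeta {0}) (c2 - zeta {0}))
    (X Y : Finset (Pt d)) (r : ℝ) (hr : 0 < r) :
    |zeta (scaleSet d r Y) - zeta (scaleSet d r X)|
      ≤ K * ((((Y : Set (Pt d)) ∆ (X : Set (Pt d))) : Set (Pt d)).ncard : ℝ) := by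
  classical
  have hK0 : 0 ≤ K := by
    rw [hK]
    exact le_max_of_le_left (by have := hzetann {0}; linarith)
  -- ζ of a singleton equals ζ {0}
  have hsingle : ∀ x : Pt d, zeta {x} = zeta {0} := by
    intro x
    have := hP2 {0} x
    simpa using this
  -- one point lemma
  have key : ∀ (S : Finset (Pt d)) (x : Pt d), x ∉ S →
      |zeta (insert x S) - zeta S| ≤ K := by
    intro S x hx
    have hdisj : Disjoint ({x} : Finset (Pt d)) S :=
      Finset.disjoint_singleton_left.2 hx
    have hins : insert x S = {x} ∪ S := Finset.insert_eq x S
    have hub : zeta (insert x S) - zeta S ≤ c1 + zeta {0} := by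
      have := hP3 {x} S hdisj
      rw [← hins, hsingle x] at this
      linarith
    have hbd : (bdry d {x} S : ℝ) ≤ 1 := by
      have h1 : bdry d {x} S ≤ 1 := by
        have hsub : {y ∈ (({x} : Finset (Pt d)) : Set (Pt d)) | ∃ z ∈ S, dist y z ≤ 1}
            ⊆ ({x} : Set (Pt d)) := by
          intro y hy
          simpa using hy.1
        calc bdry d {x} S ≤ ({x} : Set (Pt d)).ncard :=
              Set.ncard_le_ncard hsub (Set.finite_singleton x)
          _ = 1 := Set.ncard_singleton x
      exact_mod_cast h1
    have hlb : -(c2 - zeta {0}) ≤ zeta (insert x S) - zeta S := by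
      have := hP4 {x} S hdisj
      rw [← hins, hsingle x] at this
      nlinarith
    rw [abs_le]
    constructor
    · calc -K ≤ -(c2 - zeta {0}) := by
            rw [hK]; exact neg_le_neg (le_max_right _ _)
        _ ≤ _ := hlb
    · calc zeta (insert x S) - zeta S ≤ c1 + zeta {0} := hub
        _ ≤ K := hK ▸ le_max_left _ _
  -- main induction
  have main : ∀ (n : ℕ) (A B : Finset (Pt d)), (B ∆ A).card = n →
      |zeta B - zeta A| ≤ K * n := by
    intro n
    induction n with
    | zero =>
      intro A B h
      have : B ∆ A = ∅ := Finset.card_eq_zero.mp h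
      have hBA : B = A := by
        rw [← Finset.bot_eq_empty, symmDiff_eq_bot] at this; exact this
      simp [hBA]
    | succ n ih =>
      intro A B h
      have hne : (B ∆ A).Nonempty := by
        rw [← Finset.card_pos, h]; omega
      obtain ⟨x, hxmem⟩ := hne
      rcases Finset.mem_symmDiff.mp hxmem with ⟨hxB, hxA⟩ | ⟨hxA, hxB⟩
      · -- erase from B
        set B' := B.erase x with hB'
        have hxB' : x ∉ B' := Finset.notMem_erase x B
        have hins : insert x B' = B := Finset.insert_erase hxB
        have hcard : (B' ∆ A).card = n := by
          have hset : B' ∆ A = (B ∆ A).erase x := by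
            ext y
            by_cases hyx : y = x
            · subst hyx
              simp [Finset.mem_symmDiff, hB', hxA]
            · simp [Finset.mem_symmDiff, Finset.mem_erase, hB', hyx]
          rw [hset, Finset.card_erase_of_mem hxmem, h]; omega
        have h1 : |zeta B - zeta B'| ≤ K := by
          rw [← hins] at *
          exact key B' x hxB'
        have h2 : |zeta B' - zeta A| ≤ K * n := ih A B' hcard
        calc |zeta B - zeta A| ≤ |zeta B - zeta B'| + |zeta B' - zeta A| := by
              have := abs_sub_abs_le_abs_sub (zeta B) (zeta A)
              exact abs_sub_le _ _ _
          _ ≤ K + K * n := add_le_add h1 h2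
          _ = K * (n + 1 : ℕ) := by push_cast; ring
      · -- erase from A
        set A' := A.erase x with hA'
        have hxA' : x ∉ A' := Finset.notMem_erase x A
        have hins : insert x A' = A := Finset.insert_erase hxA
        have hcard : (B ∆ A').card = n := by
          have hset : B ∆ A' = (B ∆ A).erase x := by
            ext y
            by_cases hyx : y = x
            · subst hyx
              simp [Finset.mem_symmDiff, hA', hxB]
            · simp [Finset.mem_symmDiff, Finset.mem_erase, hA', hyx]
          rw [hset, Finset.card_erase_of_mem hxmem, h]; omega
        have h1 : |zeta A - zeta A'| ≤ K := by
          rw [← hins] at *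
          exact key A' x hxA'
        have h2 : |zeta B - zeta A'| ≤ K * n := ih A' B hcard
        calc |zeta B - zeta A| ≤ |zeta B - zeta A'| + |zeta A' - zeta A| := abs_sub_le _ _ _
          _ ≤ K * n + K := add_le_add h2 (by rwa [abs_sub_comm])
          _ = K * (n + 1 : ℕ) := by push_cast; ring
  -- apply
  have hinj : Function.Injective (fun x : Pt d => r⁻¹ • x) :=
    smul_right_injective (Pt d) (inv_ne_zero hr.ne')
  have hsd : scaleSet d r Y ∆ scaleSet d r X = (Y ∆ X).image (fun x : Pt d => r⁻¹ • x) := by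
    rw [scaleSet, scaleSet, ← Finset.image_symmDiff _ _ hinj]
  have hcard : (scaleSet d r Y ∆ scaleSet d r X).card = (Y ∆ X).card := by
    rw [hsd, Finset.card_image_of_injective _ hinj]
  have hncard : (((Y : Set (Pt d)) ∆ (X : Set (Pt d))) : Set (Pt d)).ncard = (Y ∆ X).card := by
    rw [← Finset.coe_symmDiff, Set.ncard_coe_finset]
  rw [hncard]
  exact main (Y ∆ X).card (scaleSet d r X) (scaleSet d r Y) hcard
end
end
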